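/- arXiv:2206.05660 — 2 statements merged into one kernel-verified Lean document; each statement's English description precedes it below -/
import Mathlib

section
/- Let i, k ≥ 3 and p ≥ 0 be integers with r = ⌊(L_i − 1)/F_k⌋ ≥ p and (r,p) ≠ (0,0). Then the p-Frobenius number of (L_i, L_{i+2}, L_{i+k}) equals (L_i − r·F_k − 1)·L_{i+2} + (r+p)·L_{i+k} − L_i if (L_i − r·F_k)·L_{i+2} ≥ F_{k−2}·L_i, and (F_k − 1)·L_{i+2} + (r+p−1)·L_{i+k} − L_i otherwise. -/
/-- Number of representations of `n` as a nonnegative integer combination of `a`, `b`, `c`. -/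
noncomputable def repCount (a b c : ℕ) (n : ℤ) : ℕ :=
  Nat.card {v : ℕ × ℕ × ℕ // (v.1 : ℤ) * a + v.2.1 * b + v.2.2 * c = n}

/-- `g` is the `p`-Frobenius number of `a, b, c`: the largest integer with at most `p`
representations. -/
def IsPFrob (p a b c : ℕ) (g : ℤ) : Prop :=
  IsGreatest {n : ℤ | repCount a b c n ≤ p} g

/-- Lucas numbers. -/
def lucas : ℕ → ℕ
  | 0 => 2
  | 1 => 1
  | n + 2 => lucas n + lucas (n + 1)

set_option maxHeartbeats 1000000

lemma lucas_pos (n : ℕ) : 0 < lucas n := by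
  induction n using Nat.twoStepInduction with
  | zero => simp [lucas]
  | one => simp [lucas]
  | more n ih _ => simp only [lucas]; omega

lemma lucas_fib (k i : ℕ) :
    lucas (i + k + 1) = Nat.fib (k + 1) * lucas (i + 1) + Nat.fib k * lucas i := by
  induction k using Nat.twoStepInduction with
  | zero => simp [Nat.fib_one]
  | one => show lucas (i + 2) = _; simp [lucas, Nat.fib_one, Nat.fib_two]; ring
  | more k ih1 ih2 =>
      have e : i + (k + 2) + 1 = (i + k + 1) + 2 := by ring
      rw [e]
      show lucas (i + k + 1) + lucas (i + k + 1 + 1) = _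
      have e2 : i + k + 1 + 1 = i + (k + 1) + 1 := by ring
      rw [e2, ih1, ih2, Nat.fib_add_two (n := k + 1), Nat.fib_add_two (n := k)]
      ring

lemma lucas_le_succ (n : ℕ) : lucas (n + 1) ≤ lucas (n + 2) := by
  have := lucas_pos n
  show lucas (n+1) ≤ lucas n + lucas (n+1)
  omega

lemma lucas_coprime_succ (n : ℕ) : Nat.Coprime (lucas n) (lucas (n + 1)) := by
  induction n with
  | zero => simp [lucas, Nat.Coprime]
  | succ n ih =>
      have : lucas (n + 2) = lucas n + lucas (n + 1) := rfl
      rw [Nat.Coprime, this, Nat.gcd_add_self_right]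
      exact (Nat.coprime_comm.mp ih)

lemma key_id (i k : ℕ) (hk : 2 ≤ k) :
    Nat.fib k * lucas (i + 2) = Nat.fib (k - 2) * lucas i + lucas (i + k) := by
  obtain ⟨m, rfl⟩ : ∃ m, k = m + 2 := ⟨k - 2, by omega⟩
  have h1 : lucas (i + (m + 2)) = Nat.fib (m + 2) * lucas (i + 1) + Nat.fib (m + 1) * lucas i := by
    have := lucas_fib (m + 1) i
    rw [show i + (m+1) + 1 = i + (m+2) by ring] at this
    exact this
  have h2 : lucas (i + 2) = lucas i + lucas (i + 1) := rfl
  have h3 : Nat.fib (m + 2) = Nat.fib m + Nat.fib (m + 1) := Nat.fib_add_two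
  simp only [show m + 2 - 2 = m from rfl, h1, h2, h3]
  ring

lemma lucas_coprime_i (i : ℕ) : Nat.Coprime (lucas i) (lucas (i + 2)) := by
  have h1 := lucas_coprime_succ i
  have h2 : lucas (i + 2) = lucas i + lucas (i + 1) := rfl
  rw [Nat.Coprime, h2, Nat.add_comm, Nat.gcd_add_self_right]
  exact h1

def wfun (F Z0 Z1 y0 y1 : ℕ) (ℓ : ℕ) : ℕ × ℕ :=
  if ℓ ≤ Z0 then (y0 + F * ℓ, Z0 - ℓ) else (y1 + F * (ℓ - (Z0 + 1)), Z1 - (ℓ - (Z0 + 1)))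

lemma repr_bound {a b c : ℕ} (ha : 0 < a) (hb : 0 < b) (hc : 0 < c) {n : ℤ}
    {x y z : ℕ} (hv : (x : ℤ) * a + y * b + z * c = n) :
    x ≤ n.toNat ∧ y ≤ n.toNat ∧ z ≤ n.toNat := by
  have ha' : (1:ℤ) ≤ a := by exact_mod_cast ha
  have hb' : (1:ℤ) ≤ b := by exact_mod_cast hb
  have hc' : (1:ℤ) ≤ c := by exact_mod_cast hc
  have hx : (0:ℤ) ≤ x := Int.natCast_nonneg x
  have hy : (0:ℤ) ≤ y := Int.natCast_nonneg y
  have hz : (0:ℤ) ≤ z := Int.natCast_nonneg z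
  have h1 : (x:ℤ) ≤ n := by nlinarith
  have h2 : (y:ℤ) ≤ n := by nlinarith
  have h3 : (z:ℤ) ≤ n := by nlinarith
  omega

lemma repr_finite (a b c : ℕ) (ha : 0 < a) (hb : 0 < b) (hc : 0 < c) (n : ℤ) :
    Finite {v : ℕ × ℕ × ℕ // (v.1 : ℤ) * a + v.2.1 * b + v.2.2 * c = n} := by
  let N := n.toNat + 1
  apply Finite.of_injective (β := Fin N × Fin N × Fin N)
    (fun v => (⟨v.1.1, by have := repr_bound ha hb hc v.2; omega⟩,
               ⟨v.1.2.1, by have := repr_bound ha hb hc v.2; omega⟩,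
               ⟨v.1.2.2, by have := repr_bound ha hb hc v.2; omega⟩))
  rintro ⟨⟨x,y,z⟩, hv⟩ ⟨⟨x',y',z'⟩, hv'⟩ h
  simp only [Fin.mk.injEq, Prod.mk.injEq] at h
  simp only [Subtype.mk.injEq, Prod.mk.injEq]
  exact ⟨h.1, h.2.1, h.2.2⟩

section MainArg

variable {a b c F G r q p : ℕ}

lemma mu_step (ha : a = r * F + (q + 1)) (hqF : q + 1 ≤ F) (hF : 0 < F)
    (hrGb : (r + 1) * G ≤ b) (m : ℕ) :
    ((m + a) / F) * (G * a) ≤ a * b + (m / F) * (G * a) := by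
  have h1 : (m + a) / F ≤ m / F + (r + 1) := by
    have hrF1 : (r + 1) * F = r * F + F := by ring
    have : m + a ≤ m + (r + 1) * F := by omega
    calc (m + a) / F ≤ (m + (r + 1) * F) / F := Nat.div_le_div_right this
    _ = m / F + (r + 1) := Nat.add_mul_div_right m (r + 1) hF
  have h2 : ((m + a) / F) * (G * a) ≤ (m / F + (r + 1)) * (G * a) :=
    Nat.mul_le_mul_right _ h1
  have h3 : (r + 1) * G * a ≤ b * a := Nat.mul_le_mul_right a hrGb
  nlinarith

lemma part1 (hFb : F * b = G * a + c) (hab : Nat.Coprime a b)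
    (ha : a = r * F + (q + 1)) (hqF : q + 1 ≤ F) (hF : 0 < F) (ha1 : 1 ≤ a)
    (hrGb : (r + 1) * G ≤ b)
    (D yD zD : ℕ) (hyD : yD + 1 ≤ F) (hDrep : D = yD * b + zD * c)
    (hmD2a : yD + F * zD + 1 ≤ 2 * a) (hmDpF : yD + F * zD + 1 ≤ a + p * F) :
    repCount a b c ((D : ℤ) - a) ≤ p := by
  classical
  set mD := yD + F * zD with hmDdef
  have hzD : mD / F = zD := by
    rw [hmDdef, Nat.add_mul_div_left _ _ hF, Nat.div_eq_of_lt (by omega)]; omega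
  have hFbZ : (F : ℤ) * b = G * a + c := by exact_mod_cast hFb
  have hmuD : (mD : ℤ) * b = D + zD * (G * a) := by
    rw [hDrep, hmDdef]; push_cast; linear_combination (zD : ℤ) * hFbZ
  have hmono : ∀ j : ℕ,
      (D : ℤ) ≤ ((mD + j * a : ℕ) : ℤ) * b - (((mD + j * a) / F : ℕ) : ℤ) * (G * a) := by
    intro j
    induction j with
    | zero => simp only [Nat.zero_mul, Nat.add_zero, hzD]; linarith [hmuD]
    | succ j ih =>
        have hstep := mu_step (G := G) (b := b) ha hqF hF hrGb (mD + j * a)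
        have he : mD + (j + 1) * a = (mD + j * a) + a := by ring
        rw [he]
        have hstep' : ((((mD + j * a) + a) / F : ℕ) : ℤ) * (G * a) ≤
            (a : ℤ) * b + (((mD + j * a) / F : ℕ) : ℤ) * (G * a) := by exact_mod_cast hstep
        push_cast
        push_cast at ih
        linarith
  have habZ : IsCoprime (a : ℤ) (b : ℤ) := by
    rw [Int.isCoprime_iff_gcd_eq_one]; simpa using hab
  have claim : ∀ x y z : ℕ, (x : ℤ) * a + y * b + z * c = (D : ℤ) - a →
      z < p ∧ y + F * z + a = mD := by
    intro x y z hv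
    have hx0 : (0 : ℤ) ≤ x := Int.natCast_nonneg x
    have ha1Z : (1 : ℤ) ≤ a := by exact_mod_cast ha1
    have hval : (y : ℤ) * b + z * c = (D : ℤ) - a - x * a := by linarith
    set m' := y + F * z with hm'
    have hm'b : (m' : ℤ) * b = ((y : ℤ) * b + z * c) + z * (G * a) := by
      rw [hm']; push_cast; linear_combination (z : ℤ) * hFbZ
    have hd1 : ((m' : ℤ) - mD) * b = a * (-(1 + x) + ((z : ℤ) - zD) * G) := by
      have h := hm'b
      rw [hval] at h
      linear_combination h - hmuD
    have hdvd : (a : ℤ) ∣ ((m' : ℤ) - mD) :=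
      habZ.dvd_of_dvd_mul_right (Dvd.intro _ hd1.symm)
    have hzm : F * z ≤ m' := by rw [hm']; exact Nat.le_add_left _ _
    have hm'lt : m' < mD := by
      by_contra hge
      push_neg at hge
      obtain ⟨jz, hjz⟩ := hdvd
      have hjz0 : 0 ≤ jz := by
        rcases le_or_gt 0 jz with h | h
        · exact h
        · exfalso
          have h1 : (m' : ℤ) - mD ≥ 0 := by
            have : (mD : ℤ) ≤ m' := by exact_mod_cast hge
            linarith
          nlinarith
      have hj : m' = mD + jz.toNat * a := by
        have h2 : (jz.toNat : ℤ) = jz := Int.toNat_of_nonneg hjz0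
        have h3 : (m' : ℤ) = mD + jz.toNat * a := by rw [h2]; linear_combination hjz
        exact_mod_cast h3
      have hge2 := hmono jz.toNat
      rw [← hj] at hge2
      have hzdiv : z ≤ m' / F := (Nat.le_div_iff_mul_le hF).mpr (by rwa [mul_comm])
      have hc1 : (z : ℤ) * (G * a) ≤ ((m' / F : ℕ) : ℤ) * (G * a) := by
        have := Nat.mul_le_mul_right (G * a) hzdiv
        exact_mod_cast this
      have hfin : (D : ℤ) ≤ (m' : ℤ) * b - z * (G * a) := by linarith
      rw [hm'b, hval] at hfin
      nlinarith
    obtain ⟨jz, hjz⟩ := hdvd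
    have hmD2aZ : (mD : ℤ) ≤ 2 * a - 1 := by
      have : ((yD + F * zD : ℕ) : ℤ) + 1 ≤ 2 * a := by exact_mod_cast hmD2a
      push_cast at this ⊢
      rw [hmDdef]; push_cast; linarith
    have hm'0 : (0 : ℤ) ≤ m' := Int.natCast_nonneg m'
    have hm'ltZ : (m' : ℤ) < mD := by exact_mod_cast hm'lt
    have ha1Z : (1 : ℤ) ≤ a := by exact_mod_cast ha1
    have hjzm1 : jz = -1 := by
      have hlt : jz < 0 := by nlinarith
      have hgt : -2 < jz := by nlinarith
      omega
    have hm'a : m' + a = mD := by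
      rw [hjzm1] at hjz
      have : (m' : ℤ) + a = mD := by linarith
      exact_mod_cast this
    refine ⟨?_, hm'a⟩
    by_contra hzp
    push_neg at hzp
    have h6 : F * p ≤ F * z := Nat.mul_le_mul_left F hzp
    have h7 : p * F = F * p := mul_comm _ _
    linarith [hzm, hm'a, hmDpF]
  rw [repCount]
  have hinj : Function.Injective
      (fun v : {v : ℕ × ℕ × ℕ // (v.1 : ℤ) * a + v.2.1 * b + v.2.2 * c = (D : ℤ) - a} =>
        (⟨v.1.2.2, (claim v.1.1 v.1.2.1 v.1.2.2 v.2).1⟩ : Fin p)) := by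
    rintro ⟨⟨x, y, z⟩, hv⟩ ⟨⟨x', y', z'⟩, hv'⟩ hf
    simp only [Fin.mk.injEq] at hf
    obtain ⟨-, h1⟩ := claim x y z hv
    obtain ⟨-, h2⟩ := claim x' y' z' hv'
    have hy : y = y' := by
      rw [hf] at h1
      linarith [h1, h2]
    have hx : x = x' := by
      have hzz : z = z' := hf
      rw [hy, hzz] at hv
      have : (x : ℤ) * a = (x' : ℤ) * a := by linarith [hv, hv']
      have ha0 : (a : ℤ) ≠ 0 := by exact_mod_cast (by omega : a ≠ 0)
      have := mul_right_cancel₀ ha0 this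
      exact_mod_cast this
    apply Subtype.ext
    simp only [Prod.mk.injEq]
    exact ⟨hx, hy, hf⟩
  calc Nat.card _ ≤ Nat.card (Fin p) := Nat.card_le_card_of_injective _ hinj
  _ = p := by simp

lemma basics (hFb : F * b = G * a + c) (ha : a = r * F + (q + 1)) (hqF : q + 1 ≤ F)
    (hG : 1 ≤ G) (hGF : 2 * G ≤ F) (hba : 2 * a ≤ b) (hr : 1 ≤ r) :
    2 ≤ F ∧ 1 ≤ a ∧ G * a ≤ c ∧ (r + 1) * G + 1 ≤ a ∧ a ≤ (r + 1) * F ∧ 1 ≤ b ∧ 1 ≤ c := by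
  have hF2 : 2 ≤ F := by omega
  have ha1 : 1 ≤ a := by omega
  have hFr : F ≤ r * F := Nat.le_mul_of_pos_left F hr
  have h4 : (2 * G) * (2 * a) ≤ F * b := Nat.mul_le_mul hGF hba
  have hGac : G * a ≤ c := by nlinarith
  have h2rG : r * (2 * G) ≤ r * F := Nat.mul_le_mul_left r hGF
  have hrG : (r + 1) * G + 1 ≤ a := by nlinarith
  have hrF1 : (r + 1) * F = r * F + F := by ring
  refine ⟨hF2, ha1, hGac, hrG, by omega, by omega, by nlinarith⟩

lemma part2 (hFb : F * b = G * a + c) (hab : Nat.Coprime a b)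
    (ha : a = r * F + (q + 1)) (hqF : q + 1 ≤ F) (hF : 0 < F) (ha1 : 1 ≤ a)
    (hGac : G * a ≤ c) (hb1 : 1 ≤ b) (hc1 : 1 ≤ c) (hr : 1 ≤ r) (hp : p ≤ r)
    (n : ℤ) (hn : repCount a b c n ≤ p) :
    n ≤ ((max (q * b + (r + p) * c) ((F - 1) * b + (r + p - 1) * c) : ℕ) : ℤ) - a := by
  classical
  by_contra hgt
  push_neg at hgt
  obtain ⟨A, hA⟩ : ∃ A, A = q * b + (r + p) * c := ⟨_, rfl⟩
  obtain ⟨B, hB⟩ : ∃ B, B = (F - 1) * b + (r + p - 1) * c := ⟨_, rfl⟩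
  obtain ⟨D, hD⟩ : ∃ D, D = max A B := ⟨_, rfl⟩
  rw [← hA, ← hB, ← hD] at hgt
  have hAD : A ≤ D := hD ▸ le_max_left _ _
  have hBD : B ≤ D := hD ▸ le_max_right _ _
  have hFbZ : (F : ℤ) * b = G * a + c := by exact_mod_cast hFb
  have ha1Z : (1 : ℤ) ≤ a := by exact_mod_cast ha1
  have habZ : IsCoprime (a : ℤ) (b : ℤ) := by
    rw [Int.isCoprime_iff_gcd_eq_one]; simpa using hab
  have ha0Z : (a : ℤ) ≠ 0 := by exact_mod_cast (by omega : a ≠ 0)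
  -- residue representative
  obtain ⟨u, hua, hdvd_nu⟩ : ∃ u : ℕ, u < a ∧ (a : ℤ) ∣ n - u * b := by
    obtain ⟨s, t, hst⟩ := habZ
    have hu'0 : 0 ≤ (n * t) % a := Int.emod_nonneg _ ha0Z
    have hu'a : (n * t) % a < a := Int.emod_lt_of_pos _ (by exact_mod_cast (by omega : 0 < a))
    refine ⟨((n * t) % a).toNat, ?_, ?_⟩
    · have : (((n * t) % a).toNat : ℤ) < a := by rwa [Int.toNat_of_nonneg hu'0]
      exact_mod_cast this
    · refine ⟨n * s + ((n * t) / a) * b, ?_⟩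
      rw [Int.toNat_of_nonneg hu'0]
      have hmod' : (n * t) % a = n * t - a * ((n * t) / a) := Int.emod_def _ _
      linear_combination -(n * hst) - b * hmod'
  -- division data, opaque
  obtain ⟨Z0, y0, hu_eq, hy0F⟩ : ∃ Z0 y0, F * Z0 + y0 = u ∧ y0 < F :=
    ⟨u / F, u % F, Nat.div_add_mod u F, Nat.mod_lt _ hF⟩
  obtain ⟨Z1, y1, hua_eq, hy1F⟩ : ∃ Z1 y1, F * Z1 + y1 = u + a ∧ y1 < F :=
    ⟨(u + a) / F, (u + a) % F, Nat.div_add_mod (u + a) F, Nat.mod_lt _ hF⟩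
  have hrFcomm : r * F = F * r := mul_comm _ _
  have hZ0r : Z0 ≤ r := by
    have h1 : F * Z0 < F * (r + 1) := by
      have : F * (r + 1) = F * r + F := by ring
      omega
    have := Nat.lt_of_mul_lt_mul_left h1
    omega
  have hZ10 : Z0 + r ≤ Z1 := by
    have h1 : F * (Z0 + r) < F * (Z1 + 1) := by
      have e1 : F * (Z0 + r) = F * Z0 + F * r := by ring
      have e2 : F * (Z1 + 1) = F * Z1 + F := by ring
      omega
    have := Nat.lt_of_mul_lt_mul_left h1
    omega
  have hZ01 : Z1 ≤ Z0 + (r + 1) := by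
    have h1 : F * Z1 < F * (Z0 + r + 2) := by
      have e1 : F * (Z0 + r + 2) = F * Z0 + F * r + F + F := by ring
      omega
    have := Nat.lt_of_mul_lt_mul_left h1
    omega
  -- sum invariant
  have hw_sum : ∀ ℓ, ℓ ≤ p → (wfun F Z0 Z1 y0 y1 ℓ).1 + F * (wfun F Z0 Z1 y0 y1 ℓ).2
      = if ℓ ≤ Z0 then u else u + a := by
    intro ℓ hℓ
    by_cases hcs : ℓ ≤ Z0
    · simp only [wfun, if_pos hcs]
      have h6 : F * ℓ + F * (Z0 - ℓ) = F * Z0 := by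
        rw [← Nat.mul_add]
        congr 1
        omega
      omega
    · simp only [wfun, if_neg hcs]
      push_neg at hcs
      have hl2 : ℓ - (Z0 + 1) ≤ Z1 := by omega
      have h6 : F * (ℓ - (Z0 + 1)) + F * (Z1 - (ℓ - (Z0 + 1))) = F * Z1 := by
        rw [← Nat.mul_add]
        congr 1
        omega
      omega
  -- value bound
  have hw_le : ∀ ℓ, ℓ ≤ p → (wfun F Z0 Z1 y0 y1 ℓ).1 * b + (wfun F Z0 Z1 y0 y1 ℓ).2 * c ≤ D := by
    intro ℓ hℓ
    by_cases hcs : ℓ ≤ Z0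
    · simp only [wfun, if_pos hcs]
      have hVeq : (y0 + F * ℓ) * b + (Z0 - ℓ) * c = y0 * b + Z0 * c + ℓ * (G * a) := by
        zify [hcs]
        linear_combination (ℓ : ℤ) * hFbZ
      have t1 : ℓ * (G * a) ≤ p * c := Nat.mul_le_mul hℓ hGac
      by_cases hy0q : y0 ≤ q
      · have t2 : y0 * b ≤ q * b := Nat.mul_le_mul_right b hy0q
        have t3 : Z0 * c ≤ r * c := Nat.mul_le_mul_right c hZ0r
        have hAe : A = q * b + r * c + p * c := by rw [hA]; ring
        linarith
      · push_neg at hy0q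
        have hZ0r' : Z0 < r := by
          have h8 : F * Z0 < F * r := by omega
          exact Nat.lt_of_mul_lt_mul_left h8
        have t2 : y0 * b ≤ (F - 1) * b := Nat.mul_le_mul_right b (by omega)
        have t3 : Z0 * c ≤ (r - 1) * c := Nat.mul_le_mul_right c (by omega)
        have hBe : B = (F - 1) * b + (r - 1) * c + p * c := by
          rw [hB]
          have : r + p - 1 = (r - 1) + p := by omega
          rw [this]; ring
        linarith
    · simp only [wfun, if_neg hcs]
      push_neg at hcs
      obtain ⟨l2, hl2def⟩ : ∃ l2, l2 = ℓ - (Z0 + 1) := ⟨_, rfl⟩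
      rw [← hl2def]
      have hl2p : l2 + Z0 + 1 ≤ p := by omega
      have hl2Z1 : l2 ≤ Z1 := by omega
      have hVeq : (y1 + F * l2) * b + (Z1 - l2) * c = y1 * b + Z1 * c + l2 * (G * a) := by
        zify [hl2Z1]
        linear_combination (l2 : ℤ) * hFbZ
      have t1 : l2 * (G * a) ≤ l2 * c := Nat.mul_le_mul_left l2 hGac
      by_cases hy1q : y1 ≤ q
      · have t2 : y1 * b ≤ q * b := Nat.mul_le_mul_right b hy1q
        have t4 : Z1 + l2 ≤ r + p := by omega
        have t3 : (Z1 + l2) * c ≤ (r + p) * c := Nat.mul_le_mul_right c t4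
        have he : (Z1 + l2) * c = Z1 * c + l2 * c := by ring
        have hAe : A = q * b + (r + p) * c := hA
        linarith
      · push_neg at hy1q
        have hZ1' : Z1 ≤ Z0 + r := by
          by_contra hcon
          push_neg at hcon
          have h7 : F * (Z0 + r + 1) ≤ F * Z1 := Nat.mul_le_mul_left F hcon
          have h8 : F * (Z0 + r + 1) = F * Z0 + F * r + F := by ring
          omega
        have t2 : y1 * b ≤ (F - 1) * b := Nat.mul_le_mul_right b (by omega)
        have t4 : Z1 + l2 ≤ r + p - 1 := by omega
        have t3 : (Z1 + l2) * c ≤ (r + p - 1) * c := Nat.mul_le_mul_right c t4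
        have he : (Z1 + l2) * c = Z1 * c + l2 * c := by ring
        have hBe : B = (F - 1) * b + (r + p - 1) * c := hB
        linarith
  -- divisibility of n - value
  have hw_dvd : ∀ ℓ, ℓ ≤ p →
      (a : ℤ) ∣ n - ((wfun F Z0 Z1 y0 y1 ℓ).1 * b + (wfun F Z0 Z1 y0 y1 ℓ).2 * c) := by
    intro ℓ hℓ
    obtain ⟨e, he⟩ := hdvd_nu
    by_cases hcs : ℓ ≤ Z0
    · simp only [wfun, if_pos hcs]
      refine ⟨e + G * ((Z0 : ℤ) - ℓ), ?_⟩
      have hueq : (F : ℤ) * Z0 + y0 = u := by exact_mod_cast hu_eq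
      push_cast [hcs]
      linear_combination he + ((Z0 : ℤ) - ℓ) * hFbZ - b * hueq
    · simp only [wfun, if_neg hcs]
      push_neg at hcs
      have hl2Z1 : ℓ - (Z0 + 1) ≤ Z1 := by omega
      have hcs' : Z0 + 1 ≤ ℓ := hcs
      refine ⟨e - b + G * ((Z1 : ℤ) - ((ℓ : ℤ) - ((Z0 : ℤ) + 1))), ?_⟩
      have hueq : (F : ℤ) * Z1 + y1 = (u : ℤ) + a := by exact_mod_cast hua_eq
      push_cast [hl2Z1, hcs']
      linear_combination he + ((Z1 : ℤ) - ((ℓ : ℤ) - ((Z0 : ℤ) + 1))) * hFbZ - b * hueq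
  -- value ≤ n
  have hw_len : ∀ ℓ, ℓ ≤ p →
      (((wfun F Z0 Z1 y0 y1 ℓ).1 * b + (wfun F Z0 Z1 y0 y1 ℓ).2 * c : ℕ) : ℤ) ≤ n := by
    intro ℓ hℓ
    have hVD : (((wfun F Z0 Z1 y0 y1 ℓ).1 * b + (wfun F Z0 Z1 y0 y1 ℓ).2 * c : ℕ) : ℤ) ≤ D := by
      exact_mod_cast hw_le ℓ hℓ
    have hd := hw_dvd ℓ hℓ
    by_contra hVn
    push_neg at hVn
    have h1 : 0 < (((wfun F Z0 Z1 y0 y1 ℓ).1 * b + (wfun F Z0 Z1 y0 y1 ℓ).2 * c : ℕ) : ℤ) - n := by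
      linarith
    have h2 : (a : ℤ) ∣ (((wfun F Z0 Z1 y0 y1 ℓ).1 * b + (wfun F Z0 Z1 y0 y1 ℓ).2 * c : ℕ) : ℤ) - n := by
      have h4 := dvd_neg.mpr hd
      rw [neg_sub] at h4
      push_cast at h4 ⊢
      exact h4
    have h3 := Int.le_of_dvd h1 h2
    linarith
  -- the injection
  have hinj : ∃ g : Fin (p + 1) → {v : ℕ × ℕ × ℕ // (v.1 : ℤ) * a + v.2.1 * b + v.2.2 * c = n},
      Function.Injective g := by
    refine ⟨fun ℓ =>
      ⟨(((n - (((wfun F Z0 Z1 y0 y1 ℓ.1).1 * b + (wfun F Z0 Z1 y0 y1 ℓ.1).2 * c : ℕ) : ℤ)) / a).toNat,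
        (wfun F Z0 Z1 y0 y1 ℓ.1).1, (wfun F Z0 Z1 y0 y1 ℓ.1).2), ?_⟩, ?_⟩
    · have hℓp : ℓ.1 ≤ p := by omega
      have hd := hw_dvd ℓ.1 hℓp
      have hle := hw_len ℓ.1 hℓp
      have hd' : (a : ℤ) ∣ n - (((wfun F Z0 Z1 y0 y1 ℓ.1).1 * b + (wfun F Z0 Z1 y0 y1 ℓ.1).2 * c : ℕ) : ℤ) := by
        push_cast at hd ⊢
        exact hd
      have h0 : 0 ≤ (n - (((wfun F Z0 Z1 y0 y1 ℓ.1).1 * b + (wfun F Z0 Z1 y0 y1 ℓ.1).2 * c : ℕ) : ℤ)) / a :=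
        Int.ediv_nonneg (by linarith) (by linarith)
      have h1 := Int.toNat_of_nonneg h0
      have h2 := Int.ediv_mul_cancel hd'
      simp only
      push_cast at h1 h2 ⊢
      rw [h1]
      linarith [h2]
    · intro ℓ ℓ' heq
      have hℓp : ℓ.1 ≤ p := by omega
      have hℓp' : ℓ'.1 ≤ p := by omega
      have h1 : wfun F Z0 Z1 y0 y1 ℓ.1 = wfun F Z0 Z1 y0 y1 ℓ'.1 := by
        have hv := congrArg Subtype.val heq
        simp only [Prod.mk.injEq] at hv
        exact Prod.ext hv.2.1 hv.2.2
      have hs := hw_sum ℓ.1 hℓp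
      have hs' := hw_sum ℓ'.1 hℓp'
      rw [h1] at hs
      by_cases c1 : ℓ.1 ≤ Z0 <;> by_cases c2 : ℓ'.1 ≤ Z0
      · have eA : (wfun F Z0 Z1 y0 y1 ℓ.1).1 = y0 + F * ℓ.1 := by simp [wfun, c1]
        have eB : (wfun F Z0 Z1 y0 y1 ℓ'.1).1 = y0 + F * ℓ'.1 := by simp [wfun, c2]
        have e1 : y0 + F * ℓ.1 = y0 + F * ℓ'.1 := by rw [← eA, ← eB, h1]
        have e2 : F * ℓ.1 = F * ℓ'.1 := by omega
        exact Fin.ext (Nat.eq_of_mul_eq_mul_left hF e2)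
      · rw [if_pos c1] at hs
        rw [if_neg c2] at hs'
        omega
      · rw [if_neg c1] at hs
        rw [if_pos c2] at hs'
        omega
      · have eA : (wfun F Z0 Z1 y0 y1 ℓ.1).1 = y1 + F * (ℓ.1 - (Z0+1)) := by simp [wfun, c1]
        have eB : (wfun F Z0 Z1 y0 y1 ℓ'.1).1 = y1 + F * (ℓ'.1 - (Z0+1)) := by simp [wfun, c2]
        have e1 : y1 + F * (ℓ.1 - (Z0+1)) = y1 + F * (ℓ'.1 - (Z0+1)) := by rw [← eA, ← eB, h1]
        have e2 : F * (ℓ.1 - (Z0+1)) = F * (ℓ'.1 - (Z0+1)) := by omega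
        have e3 := Nat.eq_of_mul_eq_mul_left hF e2
        push_neg at c1 c2
        exact Fin.ext (by omega)
  obtain ⟨g, hg⟩ := hinj
  have hfin : Finite {v : ℕ × ℕ × ℕ // (v.1 : ℤ) * a + v.2.1 * b + v.2.2 * c = n} :=
    repr_finite a b c (by omega) (by omega) (by omega) n
  have hcard : p + 1 ≤ repCount a b c n := by
    rw [repCount]
    calc p + 1 = Nat.card (Fin (p + 1)) := by simp
    _ ≤ _ := Nat.card_le_card_of_injective g hg
  omega

theorem mainFrob (hFb : F * b = G * a + c) (hab : Nat.Coprime a b)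
    (ha : a = r * F + (q + 1)) (hqF : q + 1 ≤ F)
    (hG : 1 ≤ G) (hGF : 2 * G ≤ F) (hba : 2 * a ≤ b) (hr : 1 ≤ r) (hp : p ≤ r) :
    IsPFrob p a b c
      (((max (q * b + (r + p) * c) ((F - 1) * b + (r + p - 1) * c) : ℕ) : ℤ) - a) := by
  obtain ⟨hF2, ha1, hGac, hrGa, harF, hb1, hc1⟩ := basics hFb ha hqF hG hGF hba hr
  have hF : 0 < F := by omega
  have hrGb : (r + 1) * G ≤ b := by linarith
  have hrFc : r * F = F * r := mul_comm _ _
  have hpFc : p * F = F * p := mul_comm _ _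
  have hFp_le : F * p ≤ F * r := Nat.mul_le_mul_left F hp
  constructor
  · show repCount a b c _ ≤ p
    rcases le_or_gt ((F - 1) * b + (r + p - 1) * c) (q * b + (r + p) * c) with hBA | hAB
    · rw [max_eq_left hBA]
      refine part1 hFb hab ha hqF hF ha1 hrGb _ q (r + p) hqF rfl ?_ ?_
      · have e1 : F * (r + p) = F * r + F * p := by ring
        omega
      · have e1 : F * (r + p) = F * r + F * p := by ring
        omega
    · rw [max_eq_right (le_of_lt hAB)]
      have e0 : F * (r + p - 1) + F = F * (r + p) := by
        have e2 : (r + p - 1) + 1 = r + p := by omega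
        calc F * (r + p - 1) + F = F * ((r + p - 1) + 1) := by ring
        _ = F * (r + p) := by rw [e2]
      have e1 : F * (r + p) = F * r + F * p := by ring
      refine part1 hFb hab ha hqF hF ha1 hrGb _ (F - 1) (r + p - 1) (by omega) rfl ?_ ?_
      · omega
      · omega
  · intro n hn
    exact part2 hFb hab ha hqF hF ha1 hGac hb1 hc1 hr hp n hn

end MainArg

theorem stmt13 (i k p : ℕ) (hi : 3 ≤ i) (hk : 3 ≤ k)
    (hr : p ≤ (lucas i - 1) / Nat.fib k)
    (hnz : ¬((lucas i - 1) / Nat.fib k = 0 ∧ p = 0)) :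
    letI L := lucas
    letI F := Nat.fib
    letI r := (L i - 1) / F k
    IsPFrob p (L i) (L (i + 2)) (L (i + k))
      (if (F (k - 2) : ℤ) * L i ≤ ((L i : ℤ) - r * F k) * L (i + 2) then
        ((L i : ℤ) - r * F k - 1) * L (i + 2) + ((r : ℤ) + p) * L (i + k) - L i
      else
        ((F k : ℤ) - 1) * L (i + 2) + ((r : ℤ) + p - 1) * L (i + k) - L i) := by
  have hF : 0 < Nat.fib k := Nat.fib_pos.mpr (by omega)
  have ha1 : 0 < lucas i := lucas_pos i
  set a := lucas i with hadef
  set b := lucas (i + 2) with hbdef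
  set c := lucas (i + k) with hcdef
  set F := Nat.fib k with hFdef
  set G := Nat.fib (k - 2) with hGdef
  set r := (a - 1) / F with hrdef
  set q := (a - 1) % F with hqdef
  have hFb : F * b = G * a + c := key_id i k (by omega)
  have hab : Nat.Coprime a b := lucas_coprime_i i
  have ha : a = r * F + (q + 1) := by
    have h1 : F * r + q = a - 1 := by rw [hrdef, hqdef]; exact Nat.div_add_mod _ _
    have h2 : F * r = r * F := mul_comm _ _
    omega
  have hqF : q + 1 ≤ F := by
    have h1 : q < F := by rw [hqdef]; exact Nat.mod_lt _ hF
    omega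
  have hG : 1 ≤ G := by
    rw [hGdef]
    exact Nat.fib_pos.mpr (by omega)
  have hGF : 2 * G ≤ F := by
    obtain ⟨m, rfl⟩ : ∃ m, k = m + 2 := ⟨k - 2, by omega⟩
    rw [hFdef, hGdef]
    have h1 : Nat.fib (m + 2) = Nat.fib m + Nat.fib (m + 1) := Nat.fib_add_two
    have h2 : Nat.fib m ≤ Nat.fib (m + 1) := Nat.fib_le_fib_succ
    have h3 : Nat.fib (m + 2 - 2) = Nat.fib m := rfl
    omega
  have hba : 2 * a ≤ b := by
    obtain ⟨m, rfl⟩ : ∃ m, i = m + 1 := ⟨i - 1, by omega⟩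
    have h1 : b = a + lucas (m + 2) := rfl
    have h2 : a ≤ lucas (m + 2) := lucas_le_succ m
    omega
  have hr1 : 1 ≤ r := by omega
  have hmf := mainFrob (p := p) hFb hab ha hqF hG hGF hba hr1 (by omega)
  have hrpc : 1 ≤ r + p := by omega
  have hF1 : 1 ≤ F := by omega
  have haZ : (a : ℤ) = r * F + (q + 1) := by exact_mod_cast ha
  have hFbZ : (F : ℤ) * b = G * a + c := by exact_mod_cast hFb
  show IsPFrob p a b c
      (if (G : ℤ) * a ≤ ((a : ℤ) - r * F) * b then
        ((a : ℤ) - r * F - 1) * b + ((r : ℤ) + p) * c - a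
      else
        ((F : ℤ) - 1) * b + ((r : ℤ) + p - 1) * c - a)
  have hcast : ∀ h : (F - 1) * b + (r + p - 1) * c ≤ q * b + (r + p) * c ∨
      q * b + (r + p) * c ≤ (F - 1) * b + (r + p - 1) * c, True := fun _ => trivial
  split_ifs with hcond
  · -- A branch
    have hGab : (G : ℤ) * a ≤ ((q : ℤ) + 1) * b := by
      have : ((a : ℤ) - r * F) = (q : ℤ) + 1 := by rw [haZ]; ring
      rwa [this] at hcond
    have hBA : (F - 1) * b + (r + p - 1) * c ≤ q * b + (r + p) * c := by
      zify [hF1, hrpc]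
      nlinarith [hFbZ, hGab]
    have heq : ((max (q * b + (r + p) * c) ((F - 1) * b + (r + p - 1) * c) : ℕ) : ℤ) - a
        = ((a : ℤ) - r * F - 1) * b + ((r : ℤ) + p) * c - a := by
      rw [max_eq_left hBA]
      push_cast
      rw [haZ]
      ring
    rwa [heq] at hmf
  · -- B branch
    push_neg at hcond
    have hGab : ((q : ℤ) + 1) * b < (G : ℤ) * a := by
      have h2 : ((a : ℤ) - r * F) = (q : ℤ) + 1 := by rw [haZ]; ring
      rwa [h2] at hcond
    have hAB : q * b + (r + p) * c ≤ (F - 1) * b + (r + p - 1) * c := by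
      zify [hF1, hrpc]
      nlinarith [hFbZ, hGab]
    have heq : ((max (q * b + (r + p) * c) ((F - 1) * b + (r + p - 1) * c) : ℕ) : ℤ) - a
        = ((F : ℤ) - 1) * b + ((r : ℤ) + p - 1) * c - a := by
      rw [max_eq_right hAB]
      push_cast [hF1, hrpc]
      ring
    rwa [heq] at hmf
end

section
/- The p-Sylvester numbers of the triple (8, 21, 55) for p = 0, 1, 2, 3, 4 are 63, 123, 180, 219, and 242, respectively; i.e., exactly 63 nonnegative integers are nonrepresentable, exactly 123 have at most 1 representation, etc. -/
/-!
A representation `x a + y b + z c = n` is determined by `(y, z)`, and a pair `(y, z)` extends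
to one exactly when `b y + c z ≤ n` and `a ∣ n - (b y + c z)`; this makes the number of
representations computable. Every such pair for `n` is also one for `n + a`, so the count is
monotone along residue classes mod `a`. Since each of `289, …, 296` has at least five
representations by `(8, 21, 55)`, so does every `n ≥ 289`, and the five counts reduce to a
finite computation over `n < 289`.
-/

open Finset

def repPairs (a b c n : ℕ) : Finset (ℕ × ℕ) :=
  (range (n / b + 1) ×ˢ range (n / c + 1)).filter
    fun v => b * v.1 + c * v.2 ≤ n ∧ a ∣ n - (b * v.1 + c * v.2)

section repPairs

variable {a b c : ℕ}

theorem mem_repPairs (hb : 0 < b) (hc : 0 < c) {n : ℕ} {v : ℕ × ℕ} :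
    v ∈ repPairs a b c n ↔ b * v.1 + c * v.2 ≤ n ∧ a ∣ n - (b * v.1 + c * v.2) := by
  simp only [repPairs, mem_filter, mem_product, mem_range, Nat.lt_succ_iff,
    Nat.le_div_iff_mul_le hb, Nat.le_div_iff_mul_le hc, and_iff_right_iff_imp]
  intro h
  constructor <;> nlinarith [h.1]

theorem repPairs_subset_repPairs_add (hb : 0 < b) (hc : 0 < c) (n : ℕ) :
    repPairs a b c n ⊆ repPairs a b c (n + a) := by
  intro v hv
  rw [mem_repPairs hb hc] at hv ⊢
  obtain ⟨hle, hdvd⟩ := hv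
  refine ⟨by omega, ?_⟩
  rw [show n + a - (b * v.1 + c * v.2) = n - (b * v.1 + c * v.2) + a by omega]
  exact dvd_add hdvd dvd_rfl

theorem repCount_natCast (n : ℕ) :
    repCount a b c n = Nat.card {v : ℕ × ℕ × ℕ // a * v.1 + b * v.2.1 + c * v.2.2 = n} :=
  Nat.card_congr <| Equiv.subtypeEquivRight fun _ => by
    rw [← Nat.cast_inj (R := ℤ)]; push_cast; ring_nf

theorem repCount_natCast_eq_card_repPairs (ha : 0 < a) (hb : 0 < b) (hc : 0 < c) (n : ℕ) :
    repCount a b c n = (repPairs a b c n).card := by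
  rw [repCount_natCast, ← Nat.card_eq_finsetCard]
  refine Nat.card_eq_of_bijective
    (fun v => ⟨(v.1.2.1, v.1.2.2), (mem_repPairs hb hc).2 ⟨?_, ?_⟩⟩) ⟨?_, ?_⟩
  · have := v.2; dsimp only; nlinarith
  · obtain ⟨⟨x, y, z⟩, hv⟩ := v
    exact ⟨x, by dsimp only at hv ⊢; rw [← hv]; omega⟩
  · rintro ⟨⟨x, y, z⟩, hv⟩ ⟨⟨x', y', z'⟩, hv'⟩ h
    simp only [Subtype.mk.injEq, Prod.mk.injEq] at h hv hv' ⊢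
    obtain ⟨rfl, rfl⟩ := h
    exact ⟨Nat.eq_of_mul_eq_mul_left ha (by omega), rfl, rfl⟩
  · rintro ⟨⟨y, z⟩, hv⟩
    obtain ⟨hle, hdvd⟩ : b * y + c * z ≤ n ∧ a ∣ n - (b * y + c * z) :=
      (mem_repPairs hb hc).1 hv
    refine ⟨⟨((n - (b * y + c * z)) / a, y, z), ?_⟩, rfl⟩
    change a * ((n - (b * y + c * z)) / a) + b * y + c * z = n
    rw [Nat.mul_div_cancel' hdvd]
    omega

end repPairs

theorem le_of_le_add_of_forall_lt {f : ℕ → ℕ} {a N p : ℕ} (ha : 0 < a)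
    (hmono : ∀ n, f n ≤ f (n + a)) (hbase : ∀ k < a, p ≤ f (N + k)) :
    ∀ n ≥ N, p ≤ f n := by
  intro n
  induction n using Nat.strong_induction_on with
  | _ n ih =>
    intro hn
    by_cases hlt : n < N + a
    · simpa [Nat.add_sub_cancel' hn] using hbase (n - N) (by omega)
    · calc p ≤ f (n - a) := ih (n - a) (by omega) (by omega)
        _ ≤ f (n - a + a) := hmono _
        _ = f n := by rw [Nat.sub_add_cancel (by omega)]

theorem Nat.card_setOf_le_eq_card_filter_range {f : ℕ → ℕ} {N p : ℕ}
    (h : ∀ n ≥ N, p < f n) :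
    Nat.card {n | f n ≤ p} = ((range N).filter (f · ≤ p)).card := by
  have hset : {n | f n ≤ p} = ↑((range N).filter (f · ≤ p)) := by
    ext n
    simp only [Set.mem_ofPred_eq, coe_filter, mem_range]
    exact ⟨fun hn => ⟨by_contra fun hN => (h n (not_lt.1 hN)).not_ge hn, hn⟩, And.right⟩
  rw [hset, Nat.card_coe_set_eq, Set.ncard_coe_finset]

set_option maxRecDepth 100000 in
theorem stmt18 :
    Nat.card {n : ℕ | repCount 8 21 55 (n : ℤ) ≤ 0} = 63 ∧
    Nat.card {n : ℕ | repCount 8 21 55 (n : ℤ) ≤ 1} = 123 ∧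
    Nat.card {n : ℕ | repCount 8 21 55 (n : ℤ) ≤ 2} = 180 ∧
    Nat.card {n : ℕ | repCount 8 21 55 (n : ℤ) ≤ 3} = 219 ∧
    Nat.card {n : ℕ | repCount 8 21 55 (n : ℤ) ≤ 4} = 242 := by
  have hcount (n : ℕ) : repCount 8 21 55 n = (repPairs 8 21 55 n).card :=
    repCount_natCast_eq_card_repPairs (by norm_num) (by norm_num) (by norm_num) n
  have htail : ∀ n ≥ 289, 5 ≤ (repPairs 8 21 55 n).card :=
    le_of_le_add_of_forall_lt (by norm_num)
      (fun n => card_le_card (repPairs_subset_repPairs_add (by norm_num) (by norm_num) n))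
      (by decide)
  simp only [hcount]
  refine ⟨?_, ?_, ?_, ?_, ?_⟩ <;>
    rw [Nat.card_setOf_le_eq_card_filter_range fun n hn => (by have := htail n hn; omega)] <;>
    decide
end
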